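/- Let k ≥ 1 and μ₁,…,μ_k > 0, and let α, σ : ℝ → ℝ be three times continuously differentiable on an open interval containing [0,1] with α(t)²·μ_ℓ + σ(t)² > 0 for all t ∈ [0,1] and all ℓ, satisfying the variance-preserving boundary conditions α(0) = 1, σ(0) = 0, α(1) = 0, σ(1) = 1. For each ℓ define r_ℓ(N) = S_N(μ_ℓ) − (1/2)·log μ_ℓ and E¹(μ_ℓ) = −(μ_ℓ/2)·∫₀¹ (α(t)·σ'(t) − σ(t)·α'(t))² / (α(t)²·μ_ℓ + σ(t)²)² dt. Then there exist a constant C > 0 and N₀ ∈ ℕ such that for all N ≥ N₀, | (1/2)·Σ_{ℓ=1}^{k} ( exp(2·r_ℓ(N)) − 2·r_ℓ(N) − 1 ) − (1/N²)·Σ_{ℓ=1}^{k} E¹(μ_ℓ)² | ≤ C/N³. In particular the Kullback–Leibler divergence between the reverse-sampling output distribution and the source distribution, which equals (1/2)·Σ_ℓ (exp(2·r_ℓ(N)) − 2·r_ℓ(N) − 1), is of order 1/N². -/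

import Mathlib

/-!
Write `x_t = α t • x₀ + σ t • ε` with `Var x₀ = μ`. The `j`-th summand of `S_N(μ)` is
`log (Cov(x_s, x_t) / Var x_t)` for the grid points `s = (j-1)/N`, `t = j/N`; it splits as
`½ log Var x_s - ½ log Var x_t + ½ log (1 - ρ²)` with `ρ` the correlation of `x_s` and `x_t`.
The first two terms telescope to `½ log μ` by the boundary conditions, so `r(N)` is the sum of
the `½ log (1 - ρ²)`. By Lagrange's identity `1 - ρ² = μ (α s σ t - σ s α t)² / (Var x_s Var x_t)`,
and Taylor's formula gives `1 - ρ² = (t - s)² q t + O((t - s)³)` uniformly on `[0, 1]`, where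
`q = μ (α σ' - σ α')² / (α² μ + σ²)²`. Hence `r(N) = -(1/2N) Σ_j q(j/N)/N + O(N⁻²)`, and the
Riemann sum of the Lipschitz function `q` is `∫ q + O(N⁻¹)`, so `r(N) = E¹/N + O(N⁻²)`.
Finally `½ (exp (2r) - 2r - 1) = r² + O(r³)`.
-/

open Real Set Filter Topology Asymptotics Uniformity

/-- Big-O along `𝓓[K]` is an estimate uniform over pairs of nearby points of `K`. -/
local notation "𝓓[" K "]" => (𝓤 ℝ ⊓ 𝓟 (K ×ˢ K) : Filter (ℝ × ℝ))

section NearDiagonal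

variable {K : Set ℝ}

theorem tendsto_snd_sub_fst_nearDiag :
    Tendsto (fun p : ℝ × ℝ => p.2 - p.1) 𝓓[K] (𝓝 0) := by
  refine Tendsto.mono_left ?_ inf_le_left
  rw [uniformity_eq_comap_nhds_zero ℝ]
  exact tendsto_comap

theorem eventually_mem_nearDiag : ∀ᶠ p in 𝓓[K], p.1 ∈ K ∧ p.2 ∈ K :=
  mem_inf_of_right (mem_principal_self _)

theorem isBigO_pow_pow_nearDiag {m n : ℕ} (h : m < n) :
    (fun p : ℝ × ℝ => (p.2 - p.1) ^ n) =O[𝓓[K]] fun p => (p.2 - p.1) ^ m :=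
  ((isLittleO_pow_pow h).comp_tendsto tendsto_snd_sub_fst_nearDiag).isBigO

theorem isBigO_comp_fst_nearDiag {f : ℝ → ℝ} (hK : IsCompact K) (hf : ContinuousOn f K) :
    (fun p : ℝ × ℝ => f p.1) =O[𝓓[K]] fun _ => (1 : ℝ) := by
  obtain ⟨C, hC⟩ := hK.exists_bound_of_continuousOn hf
  exact .of_bound C (eventually_mem_nearDiag.mono fun p hp => by simpa using hC _ hp.1)

theorem isBigO_comp_snd_nearDiag {f : ℝ → ℝ} (hK : IsCompact K) (hf : ContinuousOn f K) :
    (fun p : ℝ × ℝ => f p.2) =O[𝓓[K]] fun _ => (1 : ℝ) := by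
  obtain ⟨C, hC⟩ := hK.exists_bound_of_continuousOn hf
  exact .of_bound C (eventually_mem_nearDiag.mono fun p hp => by simpa using hC _ hp.2)

theorem LipschitzOnWith.isBigO_sub_nearDiag {f : ℝ → ℝ} {L : NNReal}
    (hf : LipschitzOnWith L f K) :
    (fun p : ℝ × ℝ => f p.2 - f p.1) =O[𝓓[K]] fun p => p.2 - p.1 :=
  .of_bound L (eventually_mem_nearDiag.mono fun _ hp => hf.norm_sub_le hp.2 hp.1)

theorem LipschitzOnWith.isBigO_taylor_nearDiag {f f' : ℝ → ℝ} {L : NNReal}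
    (hf' : LipschitzOnWith L f' K) (hK : Convex ℝ K)
    (hf : ∀ x ∈ K, HasDerivWithinAt f (f' x) K x) :
    (fun p : ℝ × ℝ => f p.1 - f p.2 + f' p.2 * (p.2 - p.1)) =O[𝓓[K]]
      fun p => (p.2 - p.1) ^ 2 := by
  refine .of_bound L (eventually_mem_nearDiag.mono fun ⟨s, t⟩ ⟨hs, ht⟩ => ?_)
  have hseg : uIcc t s ⊆ K := hK.ordConnected.uIcc_subset ht hs
  have hderiv : ∀ x ∈ uIcc t s,
      HasDerivWithinAt (fun x => f x - f' t * x) (f' x - f' t) (uIcc t s) x := fun x hx =>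
    ((hf x (hseg hx)).mono hseg).sub ((hasDerivWithinAt_id x _).const_mul (f' t) |>.congr_deriv
      (mul_one _))
  have hbound : ∀ x ∈ uIcc t s, ‖f' x - f' t‖ ≤ L * ‖s - t‖ := fun x hx =>
    (hf'.norm_sub_le (hseg hx) ht).trans <| by
      gcongr; exact abs_sub_left_of_mem_uIcc hx
  have := (convex_uIcc t s).norm_image_sub_le_of_norm_hasDerivWithin_le hderiv hbound
    left_mem_uIcc right_mem_uIcc
  simp only [norm_pow, Real.norm_eq_abs] at this ⊢
  calc |f s - f t + f' t * (t - s)| = |f s - f' t * s - (f t - f' t * t)| := by ring_nf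
    _ ≤ L * |s - t| * |s - t| := this
    _ = L * |t - s| ^ 2 := by rw [abs_sub_comm]; ring

theorem ContDiffOn.isBigO_taylor_nearDiag {f : ℝ → ℝ} {U : Set ℝ} (hf : ContDiffOn ℝ 2 f U)
    (hU : IsOpen U) (hKU : K ⊆ U) (hK : IsCompact K) (hKc : Convex ℝ K) :
    (fun p : ℝ × ℝ => f p.1 - f p.2 + deriv f p.2 * (p.2 - p.1)) =O[𝓓[K]]
      fun p => (p.2 - p.1) ^ 2 := by
  obtain ⟨L, hL⟩ := ((hf.deriv_of_isOpen hU (by norm_num)).mono hKU).exists_lipschitzOnWith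
    one_ne_zero hKc hK
  refine hL.isBigO_taylor_nearDiag hKc fun x hx => ?_
  exact ((hf.differentiableOn (by norm_num)).differentiableAt
    (hU.mem_nhds (hKU hx))).hasDerivAt.hasDerivWithinAt

end NearDiagonal

theorem Real.isBigO_log_one_sub_add_self :
    (fun x : ℝ => log (1 - x) + x) =O[𝓝 0] fun x => x ^ 2 := by
  refine .of_bound 2 ?_
  filter_upwards [Metric.ball_mem_nhds (0 : ℝ) one_half_pos] with x hx
  rw [mem_ball_zero_iff, Real.norm_eq_abs] at hx
  have h := Real.abs_log_sub_add_sum_range_le (hx.trans one_half_lt_one) 1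
  simp only [Finset.range_one, Finset.sum_singleton, zero_add, pow_one, Nat.cast_zero,
    div_one, Nat.reduceAdd] at h
  rw [norm_pow, Real.norm_eq_abs, Real.norm_eq_abs, add_comm]
  refine h.trans ?_
  rw [div_le_iff₀ (by linarith)]
  nlinarith [mul_nonneg (sq_nonneg |x|) (by linarith : (0 : ℝ) ≤ 1 - 2 * |x|)]

theorem mem_Icc_grid {N j : ℕ} (hj : j ∈ Finset.Icc 1 N) :
    ((j : ℝ) - 1) / N ∈ Icc (0 : ℝ) 1 ∧ (j : ℝ) / N ∈ Icc (0 : ℝ) 1 ∧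
      ((j : ℝ) - 1) / N ≤ j / N := by
  obtain ⟨hj1, hjN⟩ := Finset.mem_Icc.1 hj
  have hN : (0 : ℝ) < N := by exact_mod_cast hj1.trans hjN
  have hj1' : (1 : ℝ) ≤ j := by exact_mod_cast hj1
  have hjN' : (j : ℝ) ≤ N := by exact_mod_cast hjN
  refine ⟨⟨by positivity, ?_⟩, ⟨by positivity, ?_⟩, by gcongr; linarith⟩ <;>
    rw [div_le_one hN] <;> linarith

theorem eventually_grid_of_nearDiag {P : ℝ × ℝ → Prop}
    (hP : ∀ᶠ p in 𝓓[Icc (0 : ℝ) 1], P p) :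
    ∀ᶠ N : ℕ in atTop, ∀ j ∈ Finset.Icc 1 N, P (((j : ℝ) - 1) / N, (j : ℝ) / N) := by
  obtain ⟨V, hV, W, hW, hVW⟩ := mem_inf_iff.1 hP
  obtain ⟨ε, hε, hεV⟩ := Metric.mem_uniformity_dist.1 hV
  filter_upwards [eventually_gt_atTop ⌈ε⁻¹⌉₊] with N hN j hj
  have hN' : ε⁻¹ < N := (Nat.le_ceil _).trans_lt (by exact_mod_cast hN)
  have hN₀ : (0 : ℝ) < N := (inv_pos.2 hε).trans hN'
  obtain ⟨h₁, h₂, -⟩ := mem_Icc_grid hj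
  suffices (((j : ℝ) - 1) / N, (j : ℝ) / N) ∈ V ∩ W by rwa [← hVW] at this
  refine ⟨hεV ?_, mem_principal.1 hW ⟨h₁, h₂⟩⟩
  rwa [Real.dist_eq, ← sub_div, sub_sub_cancel_left, abs_div, abs_neg, abs_one, Nat.abs_cast,
    div_lt_comm₀ hN₀ hε, one_div]

theorem sum_Icc_sub_telescope (f : ℝ → ℝ) (N : ℕ) :
    ∑ j ∈ Finset.Icc 1 N, (f ((j : ℝ) - 1) - f j) = f 0 - f N := by
  induction N with
  | zero => simp
  | succ N ih =>
    rw [Finset.sum_Icc_succ_top (by omega), ih]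
    push_cast
    ring_nf

theorem LipschitzOnWith.abs_mul_sub_integral_le {f : ℝ → ℝ} {L : NNReal} {a b : ℝ}
    (hab : a ≤ b) (hf : LipschitzOnWith L f (Icc a b)) :
    |(b - a) * f b - ∫ x in a..b, f x| ≤ L * (b - a) ^ 2 := by
  have hint : IntervalIntegrable f MeasureTheory.volume a b :=
    (hf.continuousOn.mono (uIcc_of_le hab).subset).intervalIntegrable
  have hbound : ∀ x ∈ uIoc a b, ‖f b - f x‖ ≤ L * (b - a) := fun x hx => by
    rw [uIoc_of_le hab] at hx
    refine (hf.norm_sub_le (right_mem_Icc.2 hab) (Ioc_subset_Icc_self hx)).trans ?_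
    rw [Real.norm_eq_abs, abs_of_nonneg (by linarith [hx.2])]
    gcongr
    linarith [hx.1]
  rw [← smul_eq_mul, ← intervalIntegral.integral_const, ← intervalIntegral.integral_sub
    intervalIntegrable_const hint, ← Real.norm_eq_abs]
  refine (intervalIntegral.norm_integral_le_of_norm_le_const hbound).trans_eq ?_
  rw [abs_of_nonneg (sub_nonneg.2 hab)]
  ring

theorem LipschitzOnWith.isBigO_riemannSum_sub_integral {f : ℝ → ℝ} {L : NNReal}
    (hf : LipschitzOnWith L f (Icc 0 1)) :
    (fun N : ℕ => ∑ j ∈ Finset.Icc 1 N, f (j / N) / N - ∫ x in (0 : ℝ)..1, f x)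
      =O[atTop] fun N => (N : ℝ)⁻¹ := by
  have hint : ∀ x ∈ Icc (0 : ℝ) 1, IntervalIntegrable f MeasureTheory.volume 0 x := fun x hx =>
    (hf.continuousOn.mono (by rw [uIcc_of_le hx.1]; exact Icc_subset_Icc le_rfl hx.2)
      ).intervalIntegrable
  refine .of_bound L ?_
  filter_upwards [eventually_gt_atTop 0] with N hN
  have hN' : (0 : ℝ) < N := by exact_mod_cast hN
  have hsplit : ∫ x in (0 : ℝ)..1, f x =
      ∑ j ∈ Finset.Icc 1 N, ∫ x in ((j : ℝ) - 1) / N..j / N, f x := by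
    have h := sum_Icc_sub_telescope (fun x => -∫ y in (0 : ℝ)..x / N, f y) N
    simp only [zero_div, intervalIntegral.integral_same, neg_zero, div_self hN'.ne',
      zero_sub, neg_neg, neg_sub_neg] at h
    rw [← h]
    refine Finset.sum_congr rfl fun j hj => ?_
    obtain ⟨h₁, h₂, -⟩ := mem_Icc_grid hj
    exact intervalIntegral.integral_interval_sub_left (hint _ h₂) (hint _ h₁)
  have hstep : ∀ j ∈ Finset.Icc 1 N,
      |f (j / N) / N - ∫ x in ((j : ℝ) - 1) / N..j / N, f x| ≤ L * (1 / N) ^ 2 := by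
    intro j hj
    obtain ⟨h₁, h₂, h₁₂⟩ := mem_Icc_grid hj
    have h := (hf.mono (Icc_subset_Icc h₁.1 h₂.2)).abs_mul_sub_integral_le h₁₂
    rwa [← sub_div, sub_sub_cancel, one_div_mul_eq_div] at h
  rw [hsplit, ← Finset.sum_sub_distrib, Real.norm_eq_abs, norm_inv, Real.norm_natCast]
  calc _ ≤ ∑ j ∈ Finset.Icc 1 N, L * (1 / (N : ℝ)) ^ 2 :=
        (Finset.abs_sum_le_sum_abs _ _).trans (Finset.sum_le_sum hstep)
    _ = L * (N : ℝ)⁻¹ := by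
        rw [Finset.sum_const, Nat.card_Icc, add_tsub_cancel_right, nsmul_eq_mul]
        field_simp

/-! `pathCov` and `pathVar` are the covariance and variance of `x_t = α t • x₀ + σ t • ε` with
`Var x₀ = μ`, and `decorrelation s t = 1 - corr(x_s, x_t)²` by Lagrange's identity. -/

noncomputable def pathCov (α σ : ℝ → ℝ) (μ s t : ℝ) : ℝ := α s * α t * μ + σ s * σ t

noncomputable def pathVar (α σ : ℝ → ℝ) (μ t : ℝ) : ℝ := α t ^ 2 * μ + σ t ^ 2

noncomputable def decorrelation (α σ : ℝ → ℝ) (μ s t : ℝ) : ℝ :=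
  μ * (α s * σ t - σ s * α t) ^ 2 / (pathVar α σ μ s * pathVar α σ μ t)

noncomputable def wronskian (f g : ℝ → ℝ) (t : ℝ) : ℝ := f t * deriv g t - g t * deriv f t

noncomputable def decorrelationRate (α σ : ℝ → ℝ) (μ t : ℝ) : ℝ :=
  μ * (wronskian α σ t ^ 2 / pathVar α σ μ t ^ 2)

section Decorrelation

variable {α σ : ℝ → ℝ} {μ : ℝ}

theorem log_pathCov_div_pathVar {s t : ℝ} (hs : 0 < pathVar α σ μ s)
    (ht : 0 < pathVar α σ μ t) (hv : decorrelation α σ μ s t ≠ 1) :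
    log (pathCov α σ μ s t / pathVar α σ μ t) =
      (log (pathVar α σ μ s) - log (pathVar α σ μ t) + log (1 - decorrelation α σ μ s t)) / 2 := by
  -- `Real.log` is even, so no sign condition on `pathCov` is needed.
  have hsq : (pathCov α σ μ s t / pathVar α σ μ t) ^ 2 =
      pathVar α σ μ s / pathVar α σ μ t * (1 - decorrelation α σ μ s t) := by
    simp only [decorrelation, pathCov, pathVar] at hs ht ⊢
    field_simp
    ring
  rw [← log_div hs.ne' ht.ne', ← log_mul (div_pos hs ht).ne' (sub_ne_zero.2 hv.symm), ← hsq,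
    log_pow]
  ring

theorem sum_log_pathCov_div_pathVar {N : ℕ} (hN : 0 < N)
    (hpos : ∀ t ∈ Icc (0 : ℝ) 1, 0 < pathVar α σ μ t)
    (hα0 : α 0 = 1) (hσ0 : σ 0 = 0) (hα1 : α 1 = 0) (hσ1 : σ 1 = 1)
    (hv : ∀ j ∈ Finset.Icc 1 N, decorrelation α σ μ (((j : ℝ) - 1) / N) (j / N) ≠ 1) :
    ∑ j ∈ Finset.Icc 1 N, log (pathCov α σ μ (((j : ℝ) - 1) / N) (j / N) / pathVar α σ μ (j / N))
      = log μ / 2 +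
        ∑ j ∈ Finset.Icc 1 N, log (1 - decorrelation α σ μ (((j : ℝ) - 1) / N) (j / N)) / 2 := by
  have hN' : (0 : ℝ) < N := by exact_mod_cast hN
  rw [Finset.sum_congr rfl fun j hj => log_pathCov_div_pathVar (hpos _ (mem_Icc_grid hj).1)
    (hpos _ (mem_Icc_grid hj).2.1) (hv j hj)]
  have h₀ : pathVar α σ μ 0 = μ := by simp [pathVar, hα0, hσ0]
  have h₁ : pathVar α σ μ 1 = 1 := by simp [pathVar, hα1, hσ1]
  have h := sum_Icc_sub_telescope (fun x => log (pathVar α σ μ (x / N)) / 2) N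
  simp only [zero_div, div_self hN'.ne', h₀, h₁, log_one, sub_zero] at h
  rw [← h, ← Finset.sum_add_distrib]
  exact Finset.sum_congr rfl fun j _ => by ring

variable {K U : Set ℝ}

theorem contDiffOn_wronskian (hU : IsOpen U) (hα : ContDiffOn ℝ 2 α U)
    (hσ : ContDiffOn ℝ 2 σ U) : ContDiffOn ℝ 1 (wronskian α σ) U :=
  ((hα.of_le (by norm_num)).mul (hσ.deriv_of_isOpen hU (by norm_num))).sub
    ((hσ.of_le (by norm_num)).mul (hα.deriv_of_isOpen hU (by norm_num)))

theorem contDiffOn_decorrelationRate (hU : IsOpen U) (hKU : K ⊆ U) (hα : ContDiffOn ℝ 2 α U)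
    (hσ : ContDiffOn ℝ 2 σ U) (hpos : ∀ t ∈ K, 0 < pathVar α σ μ t) :
    ContDiffOn ℝ 1 (decorrelationRate α σ μ) K := by
  have hα₁ : ContDiffOn ℝ 1 α K := (hα.mono hKU).of_le (by norm_num)
  have hσ₁ : ContDiffOn ℝ 1 σ K := (hσ.mono hKU).of_le (by norm_num)
  exact contDiffOn_const.mul ((((contDiffOn_wronskian hU hα hσ).mono hKU).pow 2).div
    ((((hα₁.pow 2).mul contDiffOn_const).add (hσ₁.pow 2)).pow 2)
    fun t ht => pow_ne_zero 2 (hpos t ht).ne')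

theorem isBigO_cross_sub_mul_wronskian (hK : IsCompact K) (hKc : Convex ℝ K) (hU : IsOpen U)
    (hKU : K ⊆ U) (hα : ContDiffOn ℝ 2 α U) (hσ : ContDiffOn ℝ 2 σ U) :
    (fun p : ℝ × ℝ => (α p.1 * σ p.2 - σ p.1 * α p.2) - (p.2 - p.1) * wronskian α σ p.2)
      =O[𝓓[K]] fun p => (p.2 - p.1) ^ 2 :=
  -- the left side is `R α p * σ p.2 - R σ p * α p.2`, with `R` the first-order Taylor remainder
  (((hα.isBigO_taylor_nearDiag hU hKU hK hKc).mul
      (isBigO_comp_snd_nearDiag hK (hσ.continuousOn.mono hKU))).sub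
    ((hσ.isBigO_taylor_nearDiag hU hKU hK hKc).mul
      (isBigO_comp_snd_nearDiag hK (hα.continuousOn.mono hKU)))).congr
    (fun p => by simp only [wronskian]; ring) fun p => mul_one _

theorem isBigO_decorrelation_sub (hK : IsCompact K) (hKc : Convex ℝ K) (hU : IsOpen U)
    (hKU : K ⊆ U) (hα : ContDiffOn ℝ 2 α U) (hσ : ContDiffOn ℝ 2 σ U)
    (hpos : ∀ t ∈ K, 0 < pathVar α σ μ t) :
    (fun p : ℝ × ℝ => decorrelation α σ μ p.1 p.2 -
      (p.2 - p.1) ^ 2 * decorrelationRate α σ μ p.2) =O[𝓓[K]] fun p => (p.2 - p.1) ^ 3 := by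
  set W : ℝ × ℝ → ℝ := fun p => α p.1 * σ p.2 - σ p.1 * α p.2
  set φ := pathVar α σ μ
  have hφ : ContDiffOn ℝ 2 φ U := ((hα.pow 2).mul contDiffOn_const).add (hσ.pow 2)
  obtain ⟨L, hφL⟩ := (hφ.mono hKU).exists_lipschitzOnWith two_ne_zero hKc hK
  have hφinv : ContinuousOn (fun t => (φ t)⁻¹) K :=
    (hφ.continuousOn.mono hKU).inv₀ fun t ht => (hpos t ht).ne'
  have hinv : (fun p : ℝ × ℝ => (φ p.1)⁻¹ * (φ p.2)⁻¹) =O[𝓓[K]] fun _ => (1 : ℝ) :=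
    ((isBigO_comp_fst_nearDiag hK hφinv).mul (isBigO_comp_snd_nearDiag hK hφinv)).congr_right
      fun _ => mul_one 1
  have hw := isBigO_comp_snd_nearDiag hK ((contDiffOn_wronskian hU hα hσ).continuousOn.mono hKU)
  have hWm := isBigO_cross_sub_mul_wronskian hK hKc hU hKU hα hσ
  have hWp : (fun p : ℝ × ℝ => W p + (p.2 - p.1) * wronskian α σ p.2)
      =O[𝓓[K]] fun p => p.2 - p.1 :=
    (((hWm.trans (isBigO_pow_pow_nearDiag one_lt_two)).congr_right fun p => pow_one _).add
      ((((isBigO_refl (fun p : ℝ × ℝ => p.2 - p.1) _).mul hw).const_mul_left 2).congr_right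
        fun p => mul_one _)).congr_left fun p => by ring
  -- with `(s, t) = p`, `d = t - s`, `w = wronskian α σ t`, the claimed difference equals
  -- `μ (W - d w) (W + d w) / (φ s φ t) + μ d² w² (φ t - φ s) / (φ s φ t²)`
  have hmain : (fun p : ℝ × ℝ =>
        μ * ((W p - (p.2 - p.1) * wronskian α σ p.2) * (W p + (p.2 - p.1) * wronskian α σ p.2)) *
          ((φ p.1)⁻¹ * (φ p.2)⁻¹) +
        μ * ((p.2 - p.1) ^ 2 * wronskian α σ p.2 ^ 2) * (φ p.2 - φ p.1) *
          ((φ p.1)⁻¹ * (φ p.2)⁻¹ * (φ p.2)⁻¹))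
      =O[𝓓[K]] fun p => (p.2 - p.1) ^ 3 :=
    ((((hWm.mul hWp).const_mul_left μ).mul hinv).congr_right fun p => by ring).add
      (((((isBigO_refl (fun p : ℝ × ℝ => (p.2 - p.1) ^ 2) _).mul (hw.pow 2)).const_mul_left
        μ).mul hφL.isBigO_sub_nearDiag).mul (hinv.mul (isBigO_comp_snd_nearDiag hK hφinv))
        |>.congr_right fun p => by ring)
  refine hmain.congr' (eventually_mem_nearDiag.mono fun p hp => ?_) EventuallyEq.rfl
  have h₁ := (hpos _ hp.1).ne'
  have h₂ := (hpos _ hp.2).ne'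
  simp only [decorrelation, decorrelationRate, W, φ] at h₁ h₂ ⊢
  field_simp
  ring

theorem isBigO_decorrelation (hK : IsCompact K) (hKc : Convex ℝ K) (hU : IsOpen U)
    (hKU : K ⊆ U) (hα : ContDiffOn ℝ 2 α U) (hσ : ContDiffOn ℝ 2 σ U)
    (hpos : ∀ t ∈ K, 0 < pathVar α σ μ t) :
    (fun p : ℝ × ℝ => decorrelation α σ μ p.1 p.2) =O[𝓓[K]] fun p => (p.2 - p.1) ^ 2 := by
  have h := ((isBigO_refl (fun p : ℝ × ℝ => (p.2 - p.1) ^ 2) _).mul (isBigO_comp_snd_nearDiag hK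
    (contDiffOn_decorrelationRate hU hKU hα hσ hpos).continuousOn)).congr_right
      fun p => mul_one _
  exact (((isBigO_decorrelation_sub hK hKc hU hKU hα hσ hpos).trans
    (isBigO_pow_pow_nearDiag (by norm_num : 2 < 3))).add h).congr_left fun p => by ring

theorem tendsto_decorrelation (hK : IsCompact K) (hKc : Convex ℝ K) (hU : IsOpen U)
    (hKU : K ⊆ U) (hα : ContDiffOn ℝ 2 α U) (hσ : ContDiffOn ℝ 2 σ U)
    (hpos : ∀ t ∈ K, 0 < pathVar α σ μ t) :
    Tendsto (fun p : ℝ × ℝ => decorrelation α σ μ p.1 p.2) 𝓓[K] (𝓝 0) :=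
  (isBigO_decorrelation hK hKc hU hKU hα hσ hpos).trans_tendsto <| by
    simpa using (tendsto_snd_sub_fst_nearDiag (K := K)).pow 2

theorem isBigO_log_one_sub_decorrelation_add (hK : IsCompact K) (hKc : Convex ℝ K)
    (hU : IsOpen U) (hKU : K ⊆ U) (hα : ContDiffOn ℝ 2 α U) (hσ : ContDiffOn ℝ 2 σ U)
    (hpos : ∀ t ∈ K, 0 < pathVar α σ μ t) :
    (fun p : ℝ × ℝ => log (1 - decorrelation α σ μ p.1 p.2) +
      (p.2 - p.1) ^ 2 * decorrelationRate α σ μ p.2) =O[𝓓[K]] fun p => (p.2 - p.1) ^ 3 := by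
  have hlog := (Real.isBigO_log_one_sub_add_self.comp_tendsto
    (tendsto_decorrelation hK hKc hU hKU hα hσ hpos)).trans
    (((isBigO_decorrelation hK hKc hU hKU hα hσ hpos).pow 2).trans
      ((isBigO_pow_pow_nearDiag (by norm_num : 3 < 4)).congr_left fun p => by ring))
  exact (hlog.sub (isBigO_decorrelation_sub hK hKc hU hKU hα hσ hpos)).congr_left
    fun p => by simp only [Function.comp_apply]; ring

theorem isBigO_sum_log_one_sub_decorrelation_add (hU : IsOpen U) (hIU : Icc 0 1 ⊆ U)
    (hα : ContDiffOn ℝ 2 α U) (hσ : ContDiffOn ℝ 2 σ U)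
    (hpos : ∀ t ∈ Icc (0 : ℝ) 1, 0 < pathVar α σ μ t) :
    (fun N : ℕ => ∑ j ∈ Finset.Icc 1 N, (log (1 - decorrelation α σ μ (((j : ℝ) - 1) / N) (j / N))
      + (N : ℝ)⁻¹ ^ 2 * decorrelationRate α σ μ (j / N))) =O[atTop] fun N => (N : ℝ)⁻¹ ^ 2 := by
  obtain ⟨c, hc⟩ := (isBigO_log_one_sub_decorrelation_add isCompact_Icc (convex_Icc 0 1) hU hIU
    hα hσ hpos).bound
  refine .of_bound c ?_
  filter_upwards [eventually_grid_of_nearDiag hc] with N hN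
  have hstep (j : ℕ) (hj : j ∈ Finset.Icc 1 N) :
      ‖log (1 - decorrelation α σ μ (((j : ℝ) - 1) / N) (j / N))
        + (N : ℝ)⁻¹ ^ 2 * decorrelationRate α σ μ (j / N)‖ ≤ c * (N : ℝ)⁻¹ ^ 3 := by
    have h := hN j hj
    rwa [show (j : ℝ) / N - (j - 1) / N = (N : ℝ)⁻¹ by ring, norm_pow, norm_inv,
      Real.norm_natCast] at h
  refine (norm_sum_le _ _).trans ((Finset.sum_le_sum hstep).trans_eq ?_)
  rw [Finset.sum_const, Nat.card_Icc, add_tsub_cancel_right, nsmul_eq_mul, norm_pow, norm_inv,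
    Real.norm_natCast]
  rcases N.eq_zero_or_pos with rfl | hN₀
  · simp
  · field_simp

theorem isBigO_sum_log_pathCov_div_pathVar_sub (hU : IsOpen U) (hIU : Icc 0 1 ⊆ U)
    (hα : ContDiffOn ℝ 2 α U) (hσ : ContDiffOn ℝ 2 σ U)
    (hpos : ∀ t ∈ Icc (0 : ℝ) 1, 0 < pathVar α σ μ t)
    (hα0 : α 0 = 1) (hσ0 : σ 0 = 0) (hα1 : α 1 = 0) (hσ1 : σ 1 = 1) :
    (fun N : ℕ => ∑ j ∈ Finset.Icc 1 N,
        log (pathCov α σ μ (((j : ℝ) - 1) / N) (j / N) / pathVar α σ μ (j / N))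
      - 1 / 2 * log μ - (-(1 / 2) * ∫ t in (0 : ℝ)..1, decorrelationRate α σ μ t) / N)
      =O[atTop] fun N => (N : ℝ)⁻¹ ^ 2 := by
  have hv := eventually_grid_of_nearDiag ((tendsto_decorrelation isCompact_Icc (convex_Icc 0 1)
    hU hIU hα hσ hpos).eventually (gt_mem_nhds one_pos))
  obtain ⟨L, hL⟩ := (contDiffOn_decorrelationRate hU hIU hα hσ hpos).exists_lipschitzOnWith
    one_ne_zero (convex_Icc 0 1) isCompact_Icc
  have hlog := isBigO_sum_log_one_sub_decorrelation_add hU hIU hα hσ hpos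
  have hriemann := ((isBigO_refl (fun N : ℕ => (N : ℝ)⁻¹) _).mul
    hL.isBigO_riemannSum_sub_integral).congr_right fun N => (sq _).symm
  refine ((hlog.const_mul_left (1 / 2)).sub (hriemann.const_mul_left (1 / 2))).congr' ?_ .rfl
  filter_upwards [hv, eventually_gt_atTop 0] with N hv hN
  rw [sum_log_pathCov_div_pathVar hN hpos hα0 hσ0 hα1 hσ1 fun j hj => (hv j hj).ne,
    Finset.sum_add_distrib, ← Finset.mul_sum, ← Finset.sum_div, ← Finset.sum_div]
  ring

end Decorrelation

theorem isBigO_half_exp_two_mul_sub_sq {r : ℕ → ℝ} {e : ℝ}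
    (h : (fun N => r N - e / N) =O[atTop] fun N => (N : ℝ)⁻¹ ^ 2) :
    (fun N => 1 / 2 * (exp (2 * r N) - 2 * r N - 1) - e ^ 2 / N ^ 2) =O[atTop]
      fun N => (N : ℝ)⁻¹ ^ 3 := by
  have hu := tendsto_inv_atTop_nhds_zero_nat (𝕜 := ℝ)
  have hu₂ : (fun N : ℕ => (N : ℝ)⁻¹ ^ 2) =O[atTop] fun N => (N : ℝ)⁻¹ :=
    ((isLittleO_pow_pow one_lt_two).comp_tendsto hu).isBigO.congr_right fun N => pow_one _
  have he : (fun N : ℕ => e / N) =O[atTop] fun N => (N : ℝ)⁻¹ :=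
    ((isBigO_refl _ _).const_mul_left e).congr_left fun N => (div_eq_mul_inv e N).symm
  have hr : r =O[atTop] fun N => (N : ℝ)⁻¹ := ((h.trans hu₂).add he).congr_left fun N => by ring
  have hr₀ : Tendsto (fun N => 2 * r N) atTop (𝓝 0) := by
    simpa using (hr.trans_tendsto hu).const_mul 2
  have hexp := ((Real.exp_sub_sum_range_isBigO_pow 3).comp_tendsto hr₀).trans
    (((hr.const_mul_left 2).pow 3).congr_right fun N => rfl)
  have hsq : (fun N => (r N - e / N) * (r N + e / N)) =O[atTop] fun N => (N : ℝ)⁻¹ ^ 3 :=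
    (h.mul (hr.add he)).congr_right fun N => by ring
  refine ((hexp.const_mul_left (1 / 2)).add hsq).congr_left fun N => ?_
  simp only [Function.comp_apply, Finset.sum_range_succ, Finset.sum_range_zero, Nat.factorial]
  push_cast
  ring

theorem stmt_8_general (k : ℕ) (μ : Fin k → ℝ)
    (α σ : ℝ → ℝ) (s : Set ℝ) (hs : IsOpen s)
    (hsub : Set.Icc (0 : ℝ) 1 ⊆ s)
    (hα : ContDiffOn ℝ 3 α s) (hσ : ContDiffOn ℝ 3 σ s)
    (hpos : ∀ t ∈ Set.Icc (0 : ℝ) 1, ∀ ℓ, 0 < (α t) ^ 2 * μ ℓ + (σ t) ^ 2)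
    (hα0 : α 0 = 1) (hσ0 : σ 0 = 0) (hα1 : α 1 = 0) (hσ1 : σ 1 = 1)
    (S : ℝ → ℕ → ℝ)
    (hS : ∀ (m : ℝ) (N : ℕ), S m N = ∑ j ∈ Finset.Icc 1 N,
      Real.log ((α (((j : ℝ) - 1) / (N : ℝ)) * α ((j : ℝ) / (N : ℝ)) * m
          + σ (((j : ℝ) - 1) / (N : ℝ)) * σ ((j : ℝ) / (N : ℝ)))
        / ((α ((j : ℝ) / (N : ℝ))) ^ 2 * m + (σ ((j : ℝ) / (N : ℝ))) ^ 2)))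
    (r : Fin k → ℕ → ℝ)
    (hr : ∀ ℓ N, r ℓ N = S (μ ℓ) N - (1 / 2) * Real.log (μ ℓ))
    (E : Fin k → ℝ)
    (hE : ∀ ℓ, E ℓ = -(μ ℓ / 2) * ∫ t in (0 : ℝ)..1,
        (α t * deriv σ t - σ t * deriv α t) ^ 2 / ((α t) ^ 2 * μ ℓ + (σ t) ^ 2) ^ 2) :
    ∃ C > 0, ∃ N₀ : ℕ, ∀ N ≥ N₀,
      |(1 / 2) * ∑ ℓ : Fin k, (Real.exp (2 * r ℓ N) - 2 * r ℓ N - 1)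
        - (1 / (N : ℝ) ^ 2) * ∑ ℓ : Fin k, (E ℓ) ^ 2|
      ≤ C / (N : ℝ) ^ 3 := by
  have hr_sub (ℓ : Fin k) :
      (fun N : ℕ => r ℓ N - E ℓ / N) =O[atTop] fun N => (N : ℝ)⁻¹ ^ 2 := by
    have hE' : E ℓ = -(1 / 2) * ∫ t in (0 : ℝ)..1, decorrelationRate α σ (μ ℓ) t := by
      simp only [hE ℓ, decorrelationRate, wronskian, pathVar,
        intervalIntegral.integral_const_mul]
      ring
    refine (isBigO_sum_log_pathCov_div_pathVar_sub hs hsub (hα.of_le (by norm_num))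
      (hσ.of_le (by norm_num)) (fun t ht => hpos t ht ℓ) hα0 hσ0 hα1 hσ1).congr_left fun N => ?_
    rw [hr, hS, hE']
    rfl
  obtain ⟨C, hC, hbound⟩ := (IsBigO.fun_sum (s := Finset.univ) fun ℓ _ =>
    isBigO_half_exp_two_mul_sub_sq (hr_sub ℓ)).exists_pos
  obtain ⟨N₀, hN₀⟩ := eventually_atTop.1 hbound.bound
  refine ⟨C, hC, N₀, fun N hN => ?_⟩
  have h := hN₀ N hN
  rw [Real.norm_eq_abs, norm_pow, norm_inv, Real.norm_natCast, inv_pow, ← div_eq_mul_inv] at h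
  convert h using 2
  rw [Finset.mul_sum, Finset.mul_sum, ← Finset.sum_sub_distrib]
  exact Finset.sum_congr rfl fun ℓ _ => by ring

/-- Under variance-preserving boundary conditions, the KL divergence
`(1/2)·Σ_ℓ (exp(2r_ℓ(N)) − 2r_ℓ(N) − 1)` between the reverse-sampling output
distribution and the source distribution equals `(1/N²)·Σ_ℓ E¹(μ_ℓ)²` up to an
`O(1/N³)` error; in particular it is of order `1/N²`. -/
theorem stmt_8 (k : ℕ) (hk : 1 ≤ k) (μ : Fin k → ℝ) (hμ : ∀ ℓ, 0 < μ ℓ)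
    (α σ : ℝ → ℝ) (s : Set ℝ) (hs : IsOpen s)
    (hsub : Set.Icc (0 : ℝ) 1 ⊆ s)
    (hα : ContDiffOn ℝ 3 α s) (hσ : ContDiffOn ℝ 3 σ s)
    (hpos : ∀ t ∈ Set.Icc (0 : ℝ) 1, ∀ ℓ, 0 < (α t) ^ 2 * μ ℓ + (σ t) ^ 2)
    (hα0 : α 0 = 1) (hσ0 : σ 0 = 0) (hα1 : α 1 = 0) (hσ1 : σ 1 = 1)
    (S : ℝ → ℕ → ℝ)
    (hS : ∀ (m : ℝ) (N : ℕ), S m N = ∑ j ∈ Finset.Icc 1 N,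
      Real.log ((α (((j : ℝ) - 1) / (N : ℝ)) * α ((j : ℝ) / (N : ℝ)) * m
          + σ (((j : ℝ) - 1) / (N : ℝ)) * σ ((j : ℝ) / (N : ℝ)))
        / ((α ((j : ℝ) / (N : ℝ))) ^ 2 * m + (σ ((j : ℝ) / (N : ℝ))) ^ 2)))
    (r : Fin k → ℕ → ℝ)
    (hr : ∀ ℓ N, r ℓ N = S (μ ℓ) N - (1 / 2) * Real.log (μ ℓ))
    (E : Fin k → ℝ)
    (hE : ∀ ℓ, E ℓ = -(μ ℓ / 2) * ∫ t in (0 : ℝ)..1,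
        (α t * deriv σ t - σ t * deriv α t) ^ 2 / ((α t) ^ 2 * μ ℓ + (σ t) ^ 2) ^ 2) :
    ∃ C > 0, ∃ N₀ : ℕ, ∀ N ≥ N₀,
      |(1 / 2) * ∑ ℓ : Fin k, (Real.exp (2 * r ℓ N) - 2 * r ℓ N - 1)
        - (1 / (N : ℝ) ^ 2) * ∑ ℓ : Fin k, (E ℓ) ^ 2|
      ≤ C / (N : ℝ) ^ 3 :=
  stmt_8_general k μ α σ s hs hsub hα hσ hpos hα0 hσ0 hα1 hσ1 S hS r hr E hE
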